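/- arXiv:2104.05868 — 4 statements merged into one kernel-verified Lean document; each statement's English description precedes it below -/
import Mathlib

section
/- Let C : ℝ^m → ℝ be continuously differentiable and 2π-periodic in each coordinate, and suppose that for every unit vector direction and every index j, Var_θ[∂_j C(θ)] ≤ F (with θ uniform on the torus, and the translation invariance of the uniform measure). Then for any fixed L > 0 and unit vector e, Var_θ[C(θ + L·e) − C(θ)] ≤ m² L² F. -/
/-!
Write `G θ = ∂_e C(θ)` and `c = 𝔼 G`. By the fundamental theorem of calculus,
`C(θ + L e) - C(θ) - L c = ∫₀ᴸ (G(θ + t e) - c) dt`, so Cauchy–Schwarz in `t` and Fubini bound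
the second moment of the left-hand side by `L² sup_t 𝔼 (G(θ + t e) - c)²`. The quotient map sends
the uniform measure on `[0, 2π]^m` to the Haar measure of `(ℝ/2πℤ)^m`, so for periodic integrands
it is translation invariant and each of these moments equals `Var G`. Finally `G = ∑ e_j ∂_j C` with
`∑ e_j² = 1`, and Cauchy–Schwarz in `j` gives `Var G ≤ ∑ Var ∂_j C ≤ m F`.
-/

open MeasureTheory ProbabilityTheory Real

/-- The uniform probability measure on the cube `[0, 2π]^m` (the torus). -/
noncomputable def unifTorus (m : ℕ) : Measure (Fin m → ℝ) :=
  Measure.pi fun _ => (ENNReal.ofReal (2 * π))⁻¹ • volume.restrict (Set.Icc 0 (2 * π))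

open Function Set

section Periodic

variable {ι α : Type*} {T : ℝ} {f : (ι → ℝ) → α}

theorem apply_eq_of_coe_eq_of_periodic [Fintype ι] [DecidableEq ι]
    (hf : ∀ i, Periodic f (Pi.single i T)) {x y : ι → ℝ}
    (hxy : ∀ i, (x i : AddCircle T) = y i) : f x = f y := by
  have hdiff : ∀ i, ∃ k : ℤ, k • T = y i - x i := fun i =>
    (AddCircle.coe_eq_zero_iff T).1 (by rw [AddCircle.coe_sub, hxy i, sub_self])
  choose k hk using hdiff
  have hper : Periodic f (∑ i, k i • Pi.single i T) :=
    Finset.sum_induction _ (Periodic f) (fun _ _ => Periodic.add_period) (by simp [Periodic])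
      fun i _ => (hf i).zsmul (k i)
  have hsum : ∑ i, k i • Pi.single i T = y - x := by
    ext j
    simp [Finset.sum_apply, Pi.single_apply, ← hk, zsmul_eq_mul]
  rw [← hper x, hsum, add_sub_cancel]

variable [Fact (0 < T)]

variable (T) in
noncomputable def torusLift (f : (ι → ℝ) → α) (x : ι → AddCircle T) : α :=
  f fun i => AddCircle.equivIco T 0 (x i)

theorem measurable_torusLift [MeasurableSpace α] (hf : Measurable f) :
    Measurable (torusLift T f) :=
  hf.comp <| measurable_pi_iff.2 fun i => (measurable_subtype_coe.comp
    (AddCircle.measurableEquivIco T 0).measurable).comp (measurable_pi_apply i)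

variable [Fintype ι] [DecidableEq ι]

theorem torusLift_coe (hf : ∀ i, Periodic f (Pi.single i T)) (x : ι → ℝ) :
    torusLift T f (fun i => x i) = f x :=
  apply_eq_of_coe_eq_of_periodic hf fun _ => AddCircle.coe_equivIco

theorem isBounded_range_of_periodic [SeminormedAddCommGroup α] (hc : Continuous f)
    (hf : ∀ i, Periodic f (Pi.single i T)) : Bornology.IsBounded (range f) := by
  refine ((isCompact_Icc (a := 0) (b := fun _ => T)).image hc).isBounded.subset ?_
  rintro _ ⟨x, rfl⟩
  refine ⟨fun i => AddCircle.equivIco T 0 (x i), ⟨fun i => ?_, fun i => ?_⟩, torusLift_coe hf x⟩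
  · exact (AddCircle.equivIco T 0 (x i)).2.1
  · simpa using (AddCircle.equivIco T 0 (x i)).2.2.le

end Periodic

instance fact_two_pi_pos : Fact (0 < 2 * π) := ⟨two_pi_pos⟩

theorem AddCircle.measurePreserving_coe_uniform_Icc {T : ℝ} [Fact (0 < T)] :
    MeasurePreserving ((↑) : ℝ → AddCircle T)
      ((ENNReal.ofReal T)⁻¹ • volume.restrict (Icc 0 T)) haarAddCircle := by
  have h := AddCircle.measurePreserving_mk T 0
  rw [zero_add, Measure.restrict_congr_set Ioc_ae_eq_Icc] at h
  refine ⟨h.measurable, ?_⟩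
  rw [Measure.map_smul, h.map_eq, volume_eq_smul_haarAddCircle, smul_smul,
    ENNReal.inv_mul_cancel (by simp [Fact.out (p := 0 < T)]) ENNReal.ofReal_ne_top, one_smul]

theorem measurePreserving_coe_unifTorus (m : ℕ) :
    MeasurePreserving (fun (θ : Fin m → ℝ) i => (θ i : AddCircle (2 * π))) (unifTorus m)
      (Measure.pi fun _ => AddCircle.haarAddCircle) :=
  measurePreserving_pi _ _ fun _ => AddCircle.measurePreserving_coe_uniform_Icc

instance isProbabilityMeasure_unifTorus (m : ℕ) : IsProbabilityMeasure (unifTorus m) :=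
  ⟨by simpa using
    (measurePreserving_coe_unifTorus m).measure_preimage MeasurableSet.univ.nullMeasurableSet⟩

theorem integral_unifTorus_comp_add_right {m : ℕ} {f : (Fin m → ℝ) → ℝ} (hm : Measurable f)
    (hf : ∀ i, Periodic f (Pi.single i (2 * π))) (v : Fin m → ℝ) :
    ∫ θ, f (θ + v) ∂unifTorus m = ∫ θ, f θ ∂unifTorus m := by
  set Q : (Fin m → ℝ) → Fin m → AddCircle (2 * π) := fun θ i => θ i
  have hQ : MeasurePreserving Q _ _ := measurePreserving_coe_unifTorus m
  have hHaar : ∀ w, ∫ θ, f (θ + w) ∂unifTorus m =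
      ∫ x, torusLift (2 * π) f x ∂Measure.pi fun _ => AddCircle.haarAddCircle := fun w => by
    have hshift : ∀ θ, f (θ + w) = torusLift (2 * π) f (Q w + Q θ) := fun θ => by
      rw [← torusLift_coe hf (θ + w), add_comm]
      rfl
    simp_rw [hshift]
    rw [← integral_add_left_eq_self (Q w) (f := torusLift (2 * π) f), ← hQ.map_eq,
      integral_map hQ.aemeasurable]
    exact ((measurable_torusLift hm).comp (measurable_const_add _)).aestronglyMeasurable
  rw [hHaar v, ← hHaar 0]
  simp only [add_zero]

theorem memLp_unifTorus_of_periodic {m : ℕ} {f : (Fin m → ℝ) → ℝ} (hc : Continuous f)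
    (hf : ∀ i, Periodic f (Pi.single i (2 * π))) {p : ENNReal} : MemLp f p (unifTorus m) := by
  obtain ⟨B, hB⟩ := isBounded_iff_forall_norm_le.1 (isBounded_range_of_periodic hc hf)
  exact MemLp.of_bound hc.aestronglyMeasurable B (ae_of_all _ fun θ => hB _ ⟨θ, rfl⟩)

section Moments

variable {Ω : Type*} [MeasurableSpace Ω] {μ : Measure Ω} [IsProbabilityMeasure μ]

theorem variance_le_integral_sub_sq {X : Ω → ℝ} (hX : AEStronglyMeasurable X μ) (c : ℝ) :
    variance X μ ≤ ∫ ω, (X ω - c) ^ 2 ∂μ := by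
  rw [← variance_sub_const hX c]
  exact variance_le_expectation_sq (hX.sub aestronglyMeasurable_const)

theorem variance_sum_mul_le {ι : Type*} [Fintype ι] {X : ι → Ω → ℝ} (hX : ∀ i, MemLp (X i) 2 μ)
    (a : ι → ℝ) :
    variance (fun ω => ∑ i, a i * X i ω) μ ≤ (∑ i, a i ^ 2) * ∑ i, variance (X i) μ := by
  have hint : ∀ i, Integrable (fun ω => (X i ω - μ[X i]) ^ 2) μ := fun i =>
    ((hX i).sub (memLp_const _)).integrable_sq
  have hcs : ∀ ω, (∑ i, a i * X i ω - ∑ i, a i * μ[X i]) ^ 2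
      ≤ (∑ i, a i ^ 2) * ∑ i, (X i ω - μ[X i]) ^ 2 := fun ω => by
    simp_rw [← Finset.sum_sub_distrib, ← mul_sub]
    exact Finset.sum_mul_sq_le_sq_mul_sq _ _ _
  calc variance (fun ω => ∑ i, a i * X i ω) μ
      ≤ ∫ ω, (∑ i, a i * X i ω - ∑ i, a i * μ[X i]) ^ 2 ∂μ :=
        variance_le_integral_sub_sq (Finset.aestronglyMeasurable_fun_sum _ fun i _ =>
          ((hX i).aestronglyMeasurable.const_mul (a i))) _
    _ ≤ ∫ ω, (∑ i, a i ^ 2) * ∑ i, (X i ω - μ[X i]) ^ 2 ∂μ :=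
        integral_mono_of_nonneg (ae_of_all _ fun _ => sq_nonneg _)
          ((integrable_finsetSum _ fun i _ => hint i).const_mul _) (ae_of_all _ hcs)
    _ = (∑ i, a i ^ 2) * ∑ i, variance (X i) μ := by
        rw [integral_const_mul, integral_finsetSum _ fun i _ => hint i]
        simp_rw [variance_eq_integral (hX _).aemeasurable]

theorem variance_clm_apply_le {ι : Type*} [Fintype ι] [DecidableEq ι]
    {φ : Ω → (ι → ℝ) →L[ℝ] ℝ} (hφ : ∀ j, MemLp (fun ω => φ ω (Pi.single j 1)) 2 μ)
    (e : ι → ℝ) :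
    variance (fun ω => φ ω e) μ
      ≤ (∑ j, e j ^ 2) * ∑ j, variance (fun ω => φ ω (Pi.single j 1)) μ := by
  have hsum : (fun ω => φ ω e) = fun ω => ∑ j, e j * φ ω (Pi.single j 1) := funext fun ω => by
    conv_lhs => rw [pi_eq_sum_univ' e]
    simp only [map_sum, map_smul, smul_eq_mul]
  rw [hsum]
  exact variance_sum_mul_le hφ e

end Moments

theorem sq_intervalIntegral_le {h : ℝ → ℝ} (hh : Continuous h) {L : ℝ} (hL : 0 < L) :
    (∫ t in (0 : ℝ)..L, h t) ^ 2 ≤ L * ∫ t in (0 : ℝ)..L, h t ^ 2 := by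
  have hvol : volume.real (Ioc 0 L) = L := by simp [hL.le]
  have hjensen := (even_two.convexOn_pow (𝕜 := ℝ)).map_set_average_le
    (continuous_pow 2).continuousOn isClosed_univ (by simp [hL]) (by simp)
    (ae_of_all _ fun _ => mem_univ _) hh.integrableOn_Ioc (hh.pow 2).integrableOn_Ioc
    (μ := volume) (t := Ioc 0 L)
  simp only [setAverage_eq, hvol, smul_eq_mul] at hjensen
  rw [intervalIntegral.integral_of_le hL.le, intervalIntegral.integral_of_le hL.le]
  calc (∫ t in Ioc (0 : ℝ) L, h t) ^ 2 = L ^ 2 * (L⁻¹ * ∫ t in Ioc (0 : ℝ) L, h t) ^ 2 := by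
        field_simp
    _ ≤ L ^ 2 * (L⁻¹ * ∫ t in Ioc (0 : ℝ) L, h t ^ 2) := by gcongr
    _ = L * ∫ t in Ioc (0 : ℝ) L, h t ^ 2 := by field_simp

theorem integral_sq_intervalIntegral_le {Ω : Type*} [TopologicalSpace Ω]
    [SecondCountableTopology Ω] [MeasurableSpace Ω] [OpensMeasurableSpace Ω] {μ : Measure Ω}
    [IsFiniteMeasure μ] {H : Ω → ℝ → ℝ} (hH : Continuous (uncurry H)) {B : ℝ}
    (hB : ∀ ω t, |H ω t| ≤ B) {L K : ℝ} (hL : 0 < L) (hK : ∀ t, ∫ ω, H ω t ^ 2 ∂μ ≤ K) :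
    ∫ ω, (∫ t in (0 : ℝ)..L, H ω t) ^ 2 ∂μ ≤ L ^ 2 * K := by
  have hint : Integrable (uncurry fun ω t => H ω t ^ 2) (μ.prod (volume.restrict (Ioc 0 L))) :=
    Integrable.of_bound (hH.pow 2).aestronglyMeasurable (B ^ 2) <| ae_of_all _ fun p => by
      change |H p.1 p.2 ^ 2| ≤ B ^ 2
      rw [abs_pow]
      exact pow_le_pow_left₀ (abs_nonneg _) (hB p.1 p.2) 2
  calc ∫ ω, (∫ t in (0 : ℝ)..L, H ω t) ^ 2 ∂μ
      ≤ ∫ ω, L * (∫ t in Ioc (0 : ℝ) L, H ω t ^ 2) ∂μ := by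
        refine integral_mono_of_nonneg (ae_of_all _ fun _ => sq_nonneg _)
          (hint.integral_prod_left.const_mul L) (ae_of_all _ fun ω => ?_)
        simpa only [intervalIntegral.integral_of_le hL.le] using
          sq_intervalIntegral_le (hH.uncurry_left ω) hL
    _ = L * ∫ t in Ioc (0 : ℝ) L, ∫ ω, H ω t ^ 2 ∂μ := by
        rw [integral_const_mul, integral_integral_swap hint]
    _ ≤ L * ∫ _ in Ioc (0 : ℝ) L, K :=
        mul_le_mul_of_nonneg_left
          (setIntegral_mono hint.integral_prod_right (integrableOn_const (by simp)) hK) hL.le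
    _ = L ^ 2 * K := by
        rw [setIntegral_const, Real.volume_real_Ioc_of_le hL.le, sub_zero, smul_eq_mul]
        ring

section Calculus

variable {E F : Type*} [NormedAddCommGroup E] [NormedSpace ℝ E] [NormedAddCommGroup F]
  [NormedSpace ℝ F] {f : E → F}

theorem Function.Periodic.fderiv {p : E} (hf : Periodic f p) : Periodic (fderiv ℝ f) p :=
  fun x => by rw [← fderiv_comp_add_right, show (fun y => f (y + p)) = f from funext hf]

theorem sub_eq_intervalIntegral_fderiv [CompleteSpace F] (hf : ContDiff ℝ 1 f) (x v : E)
    (L : ℝ) : f (x + L • v) - f x = ∫ t in (0 : ℝ)..L, fderiv ℝ f (x + t • v) v := by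
  have hline : ∀ t : ℝ, HasDerivAt (fun t : ℝ => x + t • v) v t := fun t => by
    simpa using ((hasDerivAt_id t).smul_const v).const_add x
  have hderiv : ∀ t : ℝ, HasDerivAt (fun t => f (x + t • v)) (fderiv ℝ f (x + t • v) v) t :=
    fun t => ((hf.differentiable one_ne_zero _).hasFDerivAt).comp_hasDerivAt t (hline t)
  have hcont : Continuous fun t : ℝ => fderiv ℝ f (x + t • v) v :=
    ((hf.continuous_fderiv one_ne_zero).comp (continuous_const.add
      (continuous_id.smul continuous_const))).clm_apply continuous_const
  rw [intervalIntegral.integral_eq_sub_of_hasDerivAt (fun t _ => hderiv t)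
    (hcont.intervalIntegrable 0 L)]
  simp

end Calculus

theorem variance_sub_comp_add_smul_le {V : Type*} [NormedAddCommGroup V] [NormedSpace ℝ V]
    [SecondCountableTopology V] [MeasurableSpace V] [BorelSpace V] {μ : Measure V}
    [IsProbabilityMeasure μ] {C : V → ℝ} (hC : ContDiff ℝ 1 C) {e : V} {L : ℝ} (hL : 0 < L)
    (c : ℝ) {B : ℝ} (hB : ∀ x, |fderiv ℝ C x e - c| ≤ B) {K : ℝ}
    (hK : ∀ t : ℝ, ∫ x, (fderiv ℝ C (x + t • e) e - c) ^ 2 ∂μ ≤ K) :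
    variance (fun x => C (x + L • e) - C x) μ ≤ L ^ 2 * K := by
  have hcont : Continuous fun x => fderiv ℝ C x e :=
    (hC.continuous_fderiv one_ne_zero).clm_apply continuous_const
  have hftc : ∀ x, C (x + L • e) - C x - L * c
      = ∫ t in (0 : ℝ)..L, (fderiv ℝ C (x + t • e) e - c) := fun x => by
    have hint : IntervalIntegrable (fun t => fderiv ℝ C (x + t • e) e) volume 0 L :=
      (hcont.comp (by fun_prop : Continuous fun t : ℝ => x + t • e)).intervalIntegrable _ _
    rw [intervalIntegral.integral_sub hint intervalIntegrable_const,
      intervalIntegral.integral_const, sub_eq_intervalIntegral_fderiv hC, sub_zero, smul_eq_mul]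
  calc variance (fun x => C (x + L • e) - C x) μ
      ≤ ∫ x, (C (x + L • e) - C x - L * c) ^ 2 ∂μ :=
        variance_le_integral_sub_sq (by fun_prop) _
    _ = ∫ x, (∫ t in (0 : ℝ)..L, (fderiv ℝ C (x + t • e) e - c)) ^ 2 ∂μ := by
        simp_rw [hftc]
    _ ≤ L ^ 2 * K := integral_sq_intervalIntegral_le (by fun_prop) (fun _ _ => hB _) hL hK

theorem variance_shift_diff_le_general (m : ℕ) (C : (Fin m → ℝ) → ℝ)
    (hC : ContDiff ℝ 1 C)
    (hper : ∀ (θ : Fin m → ℝ) (i : Fin m), C (θ + Pi.single i (2 * π)) = C θ)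
    (F : ℝ) (hF : 0 ≤ F)
    (hvar : ∀ j : Fin m,
      variance (fun θ => fderiv ℝ C θ (Pi.single j 1)) (unifTorus m) ≤ F)
    (L : ℝ) (hL : 0 < L) (e : Fin m → ℝ) (he : ∑ i, e i ^ 2 = 1) :
    variance (fun θ => C (θ + L • e) - C θ) (unifTorus m)
      ≤ (m : ℝ) ^ 2 * L ^ 2 * F := by
  have hcont : ∀ v, Continuous fun θ => fderiv ℝ C θ v := fun v =>
    (hC.continuous_fderiv one_ne_zero).clm_apply continuous_const
  have hperiodic : ∀ v i, Periodic (fun θ => fderiv ℝ C θ v) (Pi.single i (2 * π)) :=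
    fun v i => (Periodic.fderiv fun θ => hper θ i).comp fun φ => φ v
  set c := ∫ θ, fderiv ℝ C θ e ∂unifTorus m
  have hcentered : ∀ i, Periodic (fun θ => fderiv ℝ C θ e - c) (Pi.single i (2 * π)) :=
    fun i => (hperiodic e i).comp (· - c)
  obtain ⟨B, hB⟩ := isBounded_iff_forall_norm_le.1
    (isBounded_range_of_periodic ((hcont e).sub continuous_const) hcentered)
  have hK : ∀ t : ℝ, ∫ θ, (fderiv ℝ C (θ + t • e) e - c) ^ 2 ∂unifTorus m ≤ m * F := fun t => by
    rw [integral_unifTorus_comp_add_right (f := fun θ => (fderiv ℝ C θ e - c) ^ 2)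
      (((hcont e).sub continuous_const).pow 2).measurable (fun i => (hcentered i).comp (· ^ 2)),
      ← variance_eq_integral (hcont e).aemeasurable]
    calc variance (fun θ => fderiv ℝ C θ e) (unifTorus m)
        ≤ (∑ j, e j ^ 2) * ∑ j, variance (fun θ => fderiv ℝ C θ (Pi.single j 1)) (unifTorus m) :=
          variance_clm_apply_le (fun j => memLp_unifTorus_of_periodic (hcont _) (hperiodic _)) e
      _ ≤ m * F := by simpa [he] using Finset.sum_le_sum (s := Finset.univ) fun j _ => hvar j
  have hm : (m : ℝ) ≤ m ^ 2 := by exact_mod_cast Nat.le_self_pow two_ne_zero m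
  calc variance (fun θ => C (θ + L • e) - C θ) (unifTorus m)
      ≤ L ^ 2 * (m * F) := variance_sub_comp_add_smul_le hC hL c (fun θ => hB _ ⟨θ, rfl⟩) hK
    _ = L ^ 2 * F * m := by ring
    _ ≤ L ^ 2 * F * m ^ 2 := mul_le_mul_of_nonneg_left hm (mul_nonneg (sq_nonneg L) hF)
    _ = (m : ℝ) ^ 2 * L ^ 2 * F := by ring

/-- Barren plateaus imply cost concentration: if the variance of every partial derivative of a
continuously differentiable, coordinatewise `2π`-periodic cost is bounded by `F`, then the
variance of the finite difference along any fixed direction `e` (a unit vector) and distance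
`L` is at most `m² L² F`. -/
theorem variance_shift_diff_le (m : ℕ) (C : (Fin m → ℝ) → ℝ)
    (hC : ContDiff ℝ 1 C)
    (hper : ∀ (θ : Fin m → ℝ) (i : Fin m), C (θ + Pi.single i (2 * π)) = C θ)
    (hL2 : ∀ j : Fin m,
      MemLp (fun θ => fderiv ℝ C θ (Pi.single j 1)) 2 (unifTorus m))
    (F : ℝ) (hF : 0 ≤ F)
    (hvar : ∀ j : Fin m,
      variance (fun θ => fderiv ℝ C θ (Pi.single j 1)) (unifTorus m) ≤ F)
    (L : ℝ) (hL : 0 < L) (e : Fin m → ℝ) (he : ∑ i, e i ^ 2 = 1) :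
    variance (fun θ => C (θ + L • e) - C θ) (unifTorus m)
      ≤ (m : ℝ) ^ 2 * L ^ 2 * F :=
  variance_shift_diff_le_general m C hC hper F hF hvar L hL e he
end

section
/- Let H be a Hermitian matrix with H² = I. Then for any matrix A, i[H, A] = e^{iπH/4} A e^{−iπH/4} − e^{−iπH/4} A e^{iπH/4}. -/
open Real

/-- Even powers of an involution are `1` and odd ones are the involution itself, so the exponential
series splits into the series of `cosh` and `sinh`. -/
theorem exp_smul_of_mul_self_eq_one {𝔸 : Type*} [Ring 𝔸] [Algebra ℂ 𝔸] [TopologicalSpace 𝔸]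
    [IsTopologicalRing 𝔸] [ContinuousSMul ℂ 𝔸] [T2Space 𝔸] {a : 𝔸} (ha : a * a = 1) (z : ℂ) :
    NormedSpace.exp (z • a) = Complex.cosh z • (1 : 𝔸) + Complex.sinh z • a := by
  have h_even (n : ℕ) : a ^ (2 * n) = 1 := by rw [pow_mul, sq, ha, one_pow]
  rw [NormedSpace.exp_eq_tsum ℂ]
  refine HasSum.tsum_eq (HasSum.even_add_odd ?_ ?_)
  · convert (Complex.hasSum_cosh z).smul_const (1 : 𝔸) using 2 with n
    rw [smul_pow, h_even, smul_smul, inv_mul_eq_div]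
  · convert (Complex.hasSum_sinh z).smul_const a using 2 with n
    rw [smul_pow, pow_succ a, h_even, one_mul, smul_smul, inv_mul_eq_div]

theorem conj_sub_conj_eq_smul_commutator {R 𝔸 : Type*} [CommRing R] [Ring 𝔸] [Algebra R 𝔸]
    (a x : 𝔸) (c s : R) :
    (c • (1 : 𝔸) + s • a) * x * (c • 1 + (-s) • a) - (c • 1 + (-s) • a) * x * (c • 1 + s • a) =
      (2 * c * s) • (a * x - x * a) := by
  simp only [add_mul, mul_add, smul_mul_assoc, mul_smul_comm, one_mul, mul_one]
  module

theorem commutator_eq_shifted_conjugations_general {d : ℕ}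
    (H A : Matrix (Fin d) (Fin d) ℂ) (h2 : H * H = 1) :
    Complex.I • (H * A - A * H) =
      NormedSpace.exp ((Complex.I * (π / 4 : ℝ)) • H) * A *
        NormedSpace.exp ((-(Complex.I * (π / 4 : ℝ))) • H) -
      NormedSpace.exp ((-(Complex.I * (π / 4 : ℝ))) • H) * A *
        NormedSpace.exp ((Complex.I * (π / 4 : ℝ)) • H) := by
  set z : ℂ := Complex.I * (π / 4 : ℝ)
  have h_coeff : 2 * Complex.cosh z * Complex.sinh z = Complex.I := by
    have h_double : 2 * z = (π / 2 : ℝ) * Complex.I := by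
      simp only [z]; push_cast; ring
    rw [mul_right_comm, ← Complex.sinh_two_mul, h_double,
      Complex.sinh_mul_I, ← Complex.ofReal_sin, Real.sin_pi_div_two, Complex.ofReal_one, one_mul]
  rw [exp_smul_of_mul_self_eq_one h2, exp_smul_of_mul_self_eq_one h2, Complex.cosh_neg,
    Complex.sinh_neg, conj_sub_conj_eq_smul_commutator, h_coeff]

/-- For a Hermitian involution `H` (so `H² = 1`) and any matrix `A`,
`i[H,A] = e^{iπH/4} A e^{-iπH/4} - e^{-iπH/4} A e^{iπH/4}`. -/
theorem commutator_eq_shifted_conjugations {d : ℕ}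
    (H A : Matrix (Fin d) (Fin d) ℂ) (hH : H.IsHermitian) (h2 : H * H = 1) :
    Complex.I • (H * A - A * H) =
      NormedSpace.exp ((Complex.I * (π / 4 : ℝ)) • H) * A *
        NormedSpace.exp ((-(Complex.I * (π / 4 : ℝ))) • H) -
      NormedSpace.exp ((-(Complex.I * (π / 4 : ℝ))) • H) * A *
        NormedSpace.exp ((Complex.I * (π / 4 : ℝ)) • H) :=
  commutator_eq_shifted_conjugations_general H A h2
end

section
/- Let H be Hermitian with H² = I, let ρ and O be matrices, and define f(θ) = Tr[e^{−iθH/2} ρ e^{iθH/2} O]. Then f'(θ) = (f(θ + π/2) − f(θ − π/2))/2. -/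
/-!
Since `H * H = 1`, the exponential `exp (i t H)` equals `cos t + i sin t H`, so conjugating `ρ`
by it and pairing with `O` gives `f θ = a + b cos θ + c sin θ`. Shifting `θ` by `± π / 2` turns
`cos θ` into `∓ sin θ` and `sin θ` into `± cos θ`, so the symmetric difference quotient with step
`π / 2` is exactly `-b sin θ + c cos θ = f' θ`.
-/

open Real

section Involution

variable {A : Type*} {H : A}

/-- `(1 ± H) / 2` are the spectral projections of the involution `H`. -/
theorem smul_pow_eq_of_mul_self_eq_one [Ring A] [Algebra ℂ A] (h : H * H = 1) (z : ℂ) (n : ℕ) :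
    (z • H) ^ n = z ^ n • ((1 / 2 : ℂ) • (1 + H)) + (-z) ^ n • ((1 / 2 : ℂ) • (1 - H)) := by
  induction n with
  | zero => rw [pow_zero, pow_zero, pow_zero, one_smul, one_smul]; module
  | succ n ih =>
    rw [pow_succ, ih]
    simp only [add_mul, smul_mul_assoc, mul_smul_comm, sub_mul, one_mul, h, pow_succ, mul_smul]
    module

variable [NormedRing A] [NormedAlgebra ℂ A] [CompleteSpace A]

theorem NormedSpace.exp_smul_of_mul_self_eq_one (h : H * H = 1) (z : ℂ) :
    NormedSpace.exp (z • H) = Complex.cosh z • (1 : A) + Complex.sinh z • H := by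
  have hsum : HasSum (fun n : ℕ => ((n.factorial : ℂ)⁻¹) • (z • H) ^ n)
      (Complex.exp z • ((1 / 2 : ℂ) • (1 + H)) + Complex.exp (-z) • ((1 / 2 : ℂ) • (1 - H))) := by
    have hP := (NormedSpace.exp_series_hasSum_exp' (𝕂 := ℂ) z).smul_const ((1 / 2 : ℂ) • (1 + H))
    have hQ := (NormedSpace.exp_series_hasSum_exp' (𝕂 := ℂ) (-z)).smul_const ((1 / 2 : ℂ) • (1 - H))
    rw [← Complex.exp_eq_exp_ℂ] at hP hQ
    convert hP.add hQ using 2 with n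
    rw [smul_pow_eq_of_mul_self_eq_one h, smul_add, smul_assoc, smul_assoc]
  rw [(NormedSpace.exp_series_hasSum_exp' (z • H)).unique hsum, Complex.cosh, Complex.sinh]
  module

theorem NormedSpace.exp_I_mul_smul_of_mul_self_eq_one (h : H * H = 1) (z : ℂ) :
    NormedSpace.exp ((Complex.I * z) • H) =
      Complex.cos z • (1 : A) + (Complex.I * Complex.sin z) • H := by
  rw [NormedSpace.exp_smul_of_mul_self_eq_one h, mul_comm, Complex.cosh_mul_I,
    Complex.sinh_mul_I, mul_comm]

theorem NormedSpace.exp_I_mul_smul_conj_of_mul_self_eq_one (h : H * H = 1) (ρ : A) (z : ℂ) :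
    NormedSpace.exp ((-(Complex.I * z)) • H) * ρ * NormedSpace.exp ((Complex.I * z) • H) =
      (1 / 2 : ℂ) • (ρ + H * ρ * H) + Complex.cos (2 * z) • ((1 / 2 : ℂ) • (ρ - H * ρ * H)) +
        Complex.sin (2 * z) • ((Complex.I / 2) • (ρ * H - H * ρ)) := by
  rw [← mul_neg, NormedSpace.exp_I_mul_smul_of_mul_self_eq_one h,
    NormedSpace.exp_I_mul_smul_of_mul_self_eq_one h, Complex.cos_neg, Complex.sin_neg,
    Complex.cos_two_mul, Complex.sin_two_mul]
  simp only [add_mul, mul_add, smul_mul_assoc, mul_smul_comm, one_mul, mul_one, smul_smul]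
  linear_combination (norm := module)
    (Complex.sin_sq_add_cos_sq z - Complex.sin z ^ 2 * Complex.I_sq) • (H * ρ * H)

end Involution

-- Matrices carry no global norm; the exponential does not depend on the one chosen.
theorem Matrix.exp_I_mul_smul_conj_of_mul_self_eq_one {n : Type*} [Fintype n] [DecidableEq n]
    {H : Matrix n n ℂ} (h : H * H = 1) (ρ : Matrix n n ℂ) (z : ℂ) :
    NormedSpace.exp ((-(Complex.I * z)) • H) * ρ * NormedSpace.exp ((Complex.I * z) • H) =
      (1 / 2 : ℂ) • (ρ + H * ρ * H) + Complex.cos (2 * z) • ((1 / 2 : ℂ) • (ρ - H * ρ * H)) +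
        Complex.sin (2 * z) • ((Complex.I / 2) • (ρ * H - H * ρ)) :=
  open scoped Matrix.Norms.Operator in NormedSpace.exp_I_mul_smul_conj_of_mul_self_eq_one h ρ z

theorem deriv_eq_sub_shift_div_two_of_eq_cos_sin {f : ℝ → ℂ} (a b c : ℂ)
    (hf : ∀ θ : ℝ, f θ = a + b * Complex.cos θ + c * Complex.sin θ) (θ : ℝ) :
    deriv f θ = (f (θ + π / 2) - f (θ - π / 2)) / 2 := by
  have hderiv : HasDerivAt f (b * -Complex.sin θ + c * Complex.cos θ) θ := by
    rw [funext hf]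
    exact (((Complex.hasDerivAt_cos θ).comp_ofReal.const_mul b).const_add a).add
      ((Complex.hasDerivAt_sin θ).comp_ofReal.const_mul c)
  have hcos : Complex.cos (π / 2) = 0 := by exact_mod_cast Real.cos_pi_div_two
  have hsin : Complex.sin (π / 2) = 1 := by exact_mod_cast Real.sin_pi_div_two
  rw [hderiv.deriv, hf, hf]
  push_cast
  rw [Complex.cos_add, Complex.sin_add, Complex.cos_sub, Complex.sin_sub, hcos, hsin]
  ring

theorem parameter_shift_rule_general {d : ℕ}
    (H ρ O : Matrix (Fin d) (Fin d) ℂ) (h2 : H * H = 1)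
    (f : ℝ → ℂ)
    (hf : ∀ θ : ℝ, f θ =
      (NormedSpace.exp ((-(Complex.I * (θ / 2 : ℝ))) • H) * ρ *
        NormedSpace.exp ((Complex.I * (θ / 2 : ℝ)) • H) * O).trace) :
    ∀ θ : ℝ, deriv f θ = (f (θ + π / 2) - f (θ - π / 2)) / 2 := by
  refine deriv_eq_sub_shift_div_two_of_eq_cos_sin (((1 / 2 : ℂ) • (ρ + H * ρ * H)) * O).trace
    (((1 / 2 : ℂ) • (ρ - H * ρ * H)) * O).trace (((Complex.I / 2) • (ρ * H - H * ρ)) * O).trace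
    fun θ => ?_
  have hθ : 2 * ((θ / 2 : ℝ) : ℂ) = θ := by push_cast; ring
  rw [hf, Matrix.exp_I_mul_smul_conj_of_mul_self_eq_one h2, hθ]
  simp only [add_mul, smul_mul_assoc, Matrix.trace_add, Matrix.trace_smul, smul_eq_mul]
  ring

/-- The parameter shift rule: for a Hermitian involution `H` and matrices `ρ`, `O`, the
function `f(θ) = Tr[e^{-iθH/2} ρ e^{iθH/2} O]` satisfies
`f'(θ) = (f(θ + π/2) - f(θ - π/2)) / 2`. -/
theorem parameter_shift_rule {d : ℕ}
    (H ρ O : Matrix (Fin d) (Fin d) ℂ) (hH : H.IsHermitian) (h2 : H * H = 1)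
    (f : ℝ → ℂ)
    (hf : ∀ θ : ℝ, f θ =
      (NormedSpace.exp ((-(Complex.I * (θ / 2 : ℝ))) • H) * ρ *
        NormedSpace.exp ((Complex.I * (θ / 2 : ℝ)) • H) * O).trace) :
    ∀ θ : ℝ, deriv f θ = (f (θ + π / 2) - f (θ - π / 2)) / 2 :=
  parameter_shift_rule_general H ρ O h2 f hf
end

section
/- For the global cost C_G(θ) = 1 − ∏_{j=1}^n cos²(θ_j/2) with θ uniform on [0,2π]^n, the variance of the partial derivative with respect to θ_k equals (1/8)·(3/8)^{n−1}. -/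
open MeasureTheory ProbabilityTheory Real

theorem Fintype.prod_apply_update_const {ι M α : Type*} [Fintype ι] [DecidableEq ι]
    [CommMonoid M] (F : α → M) (k : ι) (a b : α) :
    ∏ i, F (Function.update (fun _ => a) k b i) = F b * F a ^ (Fintype.card ι - 1) := by
  rw [Finset.prod_congr rfl fun i _ => Function.apply_update (fun _ => F) _ k b i,
    Finset.prod_update_of_mem (Finset.mem_univ k), Finset.prod_const, Finset.card_sdiff]
  simp

theorem fderiv_prod_apply_single {𝕜 ι : Type*} [NontriviallyNormedField 𝕜] [Fintype ι]
    [DecidableEq ι] {f : ι → 𝕜 → 𝕜} {θ : ι → 𝕜} (hf : ∀ i, DifferentiableAt 𝕜 (f i) (θ i))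
    (k : ι) :
    fderiv 𝕜 (fun θ : ι → 𝕜 => ∏ i, f i (θ i)) θ (Pi.single k 1) =
      ∏ i, Function.update f k (deriv (f k)) i (θ i) := by
  have hfactor (i : ι) : HasFDerivAt (fun θ : ι → 𝕜 => f i (θ i))
      (deriv (f i) (θ i) • ContinuousLinearMap.proj i) θ :=
    (hf i).hasDerivAt.comp_hasFDerivAt θ (hasFDerivAt_apply (𝕜 := 𝕜) (F' := fun _ => 𝕜) i θ)
  rw [(HasFDerivAt.finsetProd fun i _ => hfactor i).fderiv]
  simp [Pi.single_apply, Function.apply_update (fun i (g : 𝕜 → 𝕜) => g (θ i)),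
    Finset.prod_update_of_mem, Finset.sdiff_singleton_eq_erase, mul_comm]

theorem variance_pi_prod {ι : Type*} [Fintype ι] {E : ι → Type*} [∀ i, MeasurableSpace (E i)]
    {μ : ∀ i, Measure (E i)} [∀ i, IsProbabilityMeasure (μ i)] {g : ∀ i, E i → ℝ}
    (hg : MemLp (fun x => ∏ i, g i (x i)) 2 (Measure.pi μ)) :
    variance (fun x => ∏ i, g i (x i)) (Measure.pi μ) =
      ∏ i, ∫ y, g i y ^ 2 ∂μ i - (∏ i, ∫ y, g i y ∂μ i) ^ 2 := by
  rw [variance_eq_sub hg, ← integral_fintype_prod_eq_prod, ← integral_fintype_prod_eq_prod]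
  simp only [Pi.pow_apply, Finset.prod_pow]

theorem memLp_prod_of_abs_le {ι : Type*} [Fintype ι] {E : ι → Type*}
    [∀ i, MeasurableSpace (E i)] {μ : Measure (∀ i, E i)} [IsFiniteMeasure μ]
    {g : ∀ i, E i → ℝ} {C : ι → ℝ} (hg : ∀ i, Measurable (g i)) (hC : ∀ i y, |g i y| ≤ C i)
    (p : ENNReal) : MemLp (fun x => ∏ i, g i (x i)) p μ :=
  MemLp.of_bound
    (Finset.measurable_prod _ fun i _ => (hg i).comp (measurable_pi_apply i)).aestronglyMeasurable
    (∏ i, C i) (Filter.Eventually.of_forall fun x => by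
      rw [Real.norm_eq_abs, Finset.abs_prod]
      exact Finset.prod_le_prod (fun i _ => abs_nonneg _) fun i _ => hC i (x i))

theorem cos_half_sq (x : ℝ) : cos (x / 2) ^ 2 = 1 / 2 + cos x / 2 := by
  rw [cos_sq, mul_div_cancel₀ x two_ne_zero]

theorem fderiv_one_sub_prod_cos_half_sq_apply_single {ι : Type*} [Fintype ι] [DecidableEq ι]
    (k : ι) (θ : ι → ℝ) :
    fderiv ℝ (fun θ : ι → ℝ => 1 - ∏ j, cos (θ j / 2) ^ 2) θ (Pi.single k 1) =
      -∏ j, Function.update (fun _ x => 1 / 2 + cos x / 2) k (fun x => -sin x / 2) j (θ j) := by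
  have hderiv : deriv (fun x => 1 / 2 + cos x / 2) = fun x => -sin x / 2 := by
    funext x; simp
  simp only [cos_half_sq, fderiv_const_sub, neg_apply]
  rw [fderiv_prod_apply_single (f := fun _ x => 1 / 2 + cos x / 2) (fun _ => by fun_prop),
    hderiv]

noncomputable def uniformAngle : Measure ℝ :=
  (ENNReal.ofReal (2 * π))⁻¹ • volume.restrict (Set.Icc 0 (2 * π))

instance : IsProbabilityMeasure uniformAngle where
  measure_univ := by
    simp only [uniformAngle, Measure.smul_apply, Measure.restrict_apply MeasurableSet.univ,
      Set.univ_inter, Real.volume_Icc, sub_zero, smul_eq_mul]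
    exact ENNReal.inv_mul_cancel (ENNReal.ofReal_ne_zero_iff.2 (by positivity))
      ENNReal.ofReal_ne_top

theorem unifTorus_eq_pi (n : ℕ) : unifTorus n = Measure.pi fun _ => uniformAngle := rfl

theorem integral_uniformAngle (f : ℝ → ℝ) :
    ∫ x, f x ∂uniformAngle = (2 * π)⁻¹ * ∫ x in (0 : ℝ)..2 * π, f x := by
  rw [uniformAngle, integral_smul_measure, integral_Icc_eq_integral_Ioc,
    ← intervalIntegral.integral_of_le (by positivity), ENNReal.toReal_inv,
    ENNReal.toReal_ofReal (by positivity), smul_eq_mul]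

theorem integral_neg_sin_div_two_uniformAngle : ∫ x, -sin x / 2 ∂uniformAngle = 0 := by
  simp [integral_uniformAngle]

theorem integral_neg_sin_div_two_sq_uniformAngle :
    ∫ x, (-sin x / 2) ^ 2 ∂uniformAngle = 1 / 8 := by
  simp [integral_uniformAngle, div_pow]
  field_simp
  norm_num

theorem integral_half_add_half_cos_sq_uniformAngle :
    ∫ x, (1 / 2 + cos x / 2) ^ 2 ∂uniformAngle = 3 / 8 := by
  have (x : ℝ) : (1 / 2 + cos x / 2) ^ 2 = 1 / 4 + cos x / 2 + cos x ^ 2 / 4 := by ring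
  rw [integral_uniformAngle]
  simp only [this]
  rw [intervalIntegral.integral_add, intervalIntegral.integral_add]
  · simp [integral_cos_sq]
    field_simp
    norm_num
  all_goals exact Continuous.intervalIntegrable (by fun_prop) _ _

/-- For the global cost C_G(θ) = 1 - ∏ cos²(θⱼ/2) with θ uniform on [0,2π]^n,
the variance of the partial derivative with respect to θ_k is (1/8)(3/8)^(n-1). -/
theorem variance_partial_global_cost (n : ℕ) (k : Fin n) :
    variance
      (fun θ => fderiv ℝ
        (fun θ : Fin n → ℝ => 1 - ∏ j, Real.cos (θ j / 2) ^ 2) θ (Pi.single k 1))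
      (unifTorus n)
      = (1 / 8) * (3 / 8) ^ (n - 1) := by
  set c : ℝ → ℝ := fun x => 1 / 2 + cos x / 2
  set g := Function.update (fun _ : Fin n => c) k (fun x => -sin x / 2) with hg
  have hpartial : (fun θ => fderiv ℝ
      (fun θ : Fin n → ℝ => 1 - ∏ j, Real.cos (θ j / 2) ^ 2) θ (Pi.single k 1)) =
      -fun θ => ∏ j, g j (θ j) :=
    funext (fderiv_one_sub_prod_cos_half_sq_apply_single k)
  have hmeas : ∀ j, Measurable (g j) :=
    (Function.forall_update_iff _ fun _ (h : ℝ → ℝ) => Measurable h).2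
      ⟨by fun_prop, fun _ _ => by fun_prop⟩
  have hbound : ∀ j x, |g j x| ≤ 1 :=
    (Function.forall_update_iff _ fun _ (h : ℝ → ℝ) => ∀ x, |h x| ≤ 1).2
      ⟨fun x => by rw [abs_div, abs_neg, abs_two]; linarith [abs_sin_le_one x],
       fun _ _ x => by
        simp only [c, abs_le]; constructor <;> linarith [neg_one_le_cos x, cos_le_one x]⟩
  rw [hpartial, variance_neg, unifTorus_eq_pi,
    variance_pi_prod (memLp_prod_of_abs_le hmeas hbound 2), hg,
    Fintype.prod_apply_update_const (fun h : ℝ → ℝ => ∫ y, h y ^ 2 ∂uniformAngle),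
    Fintype.prod_apply_update_const (fun h : ℝ → ℝ => ∫ y, h y ∂uniformAngle)]
  simp only [c, integral_neg_sin_div_two_uniformAngle, integral_neg_sin_div_two_sq_uniformAngle,
    integral_half_add_half_cos_sq_uniformAngle, Fintype.card_fin]
  ring
end
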